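/- Let H be a real Hilbert space and A : H → H be σ-strongly monotone and β-Lipschitz continuous with 0 < σ ≤ β. Then the reflected resolvent R_A = 2J_A − Id is δ-contractive with δ = √(1 − 4σ/(1 + 2σ + β²)) ∈ [0,1). -/

import Mathlib

/-! Put `w = J x - J y` and `a = A (J x) - A (J y)`. Then `x - y = w + a` while the reflected
resolvent maps it to `w - a`, and `‖w + a‖² - ‖w - a‖² = 4 ⟪w, a⟫`. Strong monotonicity and the
Lipschitz bound give `σ ‖w + a‖² ≤ (1 + 2σ + β²) ⟪w, a⟫`, so `‖w - a‖² ≤ δ² ‖w + a‖²`. -/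

open RealInnerProductSpace

section Increments

variable {H : Type*} [NormedAddCommGroup H] [InnerProductSpace ℝ H]

theorem mul_norm_add_sq_le_mul_inner {σ β : ℝ} (hσ : 0 ≤ σ) {w a : H}
    (hsm : σ * ‖w‖ ^ 2 ≤ ⟪w, a⟫) (hlip : ‖a‖ ≤ β * ‖w‖) :
    σ * ‖w + a‖ ^ 2 ≤ (1 + 2 * σ + β ^ 2) * ⟪w, a⟫ := by
  have ha_sq : ‖a‖ ^ 2 ≤ β ^ 2 * ‖w‖ ^ 2 := by
    rw [← mul_pow]; exact pow_le_pow_left₀ (norm_nonneg a) hlip 2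
  have ha_inner : σ * ‖a‖ ^ 2 ≤ β ^ 2 * ⟪w, a⟫ :=
    calc σ * ‖a‖ ^ 2 ≤ σ * (β ^ 2 * ‖w‖ ^ 2) := mul_le_mul_of_nonneg_left ha_sq hσ
      _ = β ^ 2 * (σ * ‖w‖ ^ 2) := by ring
      _ ≤ β ^ 2 * ⟪w, a⟫ := mul_le_mul_of_nonneg_left hsm (sq_nonneg β)
  rw [norm_add_sq_real]
  nlinarith

theorem norm_sub_le_sqrt_mul_norm_add {σ β : ℝ} (hσ : 0 ≤ σ) {w a : H}
    (hsm : σ * ‖w‖ ^ 2 ≤ ⟪w, a⟫) (hlip : ‖a‖ ≤ β * ‖w‖) :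
    ‖w - a‖ ≤ √(1 - 4 * σ / (1 + 2 * σ + β ^ 2)) * ‖w + a‖ := by
  have hc : 0 < 1 + 2 * σ + β ^ 2 := by positivity
  have hbound : 4 * σ / (1 + 2 * σ + β ^ 2) * ‖w + a‖ ^ 2 ≤ 4 * ⟪w, a⟫ := by
    rw [div_mul_eq_mul_div, div_le_iff₀ hc]
    nlinarith [mul_norm_add_sq_le_mul_inner hσ hsm hlip]
  have hsq : ‖w - a‖ ^ 2 ≤ (1 - 4 * σ / (1 + 2 * σ + β ^ 2)) * ‖w + a‖ ^ 2 := by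
    rw [norm_add_sq_real] at hbound
    rw [norm_sub_sq_real, norm_add_sq_real]
    linarith
  calc ‖w - a‖ = √(‖w - a‖ ^ 2) := (Real.sqrt_sq (norm_nonneg _)).symm
    _ ≤ √((1 - 4 * σ / (1 + 2 * σ + β ^ 2)) * ‖w + a‖ ^ 2) := Real.sqrt_le_sqrt hsq
    _ = √(1 - 4 * σ / (1 + 2 * σ + β ^ 2)) * ‖w + a‖ := by
      rw [Real.sqrt_mul' _ (sq_nonneg _), Real.sqrt_sq (norm_nonneg _)]

end Increments

theorem sqrt_one_sub_div_lt_one {σ β : ℝ} (hσ : 0 < σ) :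
    √(1 - 4 * σ / (1 + 2 * σ + β ^ 2)) < 1 := by
  rw [Real.sqrt_lt' one_pos]
  have : 0 < 4 * σ / (1 + 2 * σ + β ^ 2) := by positivity
  linarith

section Resolvent

variable {H : Type*} [AddCommGroup H] {A J : H → H}

theorem sub_eq_resolvent_sub_add (hJ : ∀ x : H, J x + A (J x) = x) (x y : H) :
    x - y = (J x - J y) + (A (J x) - A (J y)) := by
  linear_combination (norm := abel) hJ y - hJ x

theorem reflected_resolvent_sub_eq [Module ℝ H] (hJ : ∀ x : H, J x + A (J x) = x) (x y : H) :
    ((2 : ℝ) • J x - x) - ((2 : ℝ) • J y - y) = (J x - J y) - (A (J x) - A (J y)) := by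
  linear_combination (norm := module) hJ x - hJ y

end Resolvent

theorem reflected_resolvent_contraction_sm_lipschitz_general
    {H : Type*} [NormedAddCommGroup H] [InnerProductSpace ℝ H]
    (σ β : ℝ) (hσ : 0 < σ)
    (A J : H → H)
    (hsm : ∀ x y : H, ⟪A x - A y, x - y⟫ ≥ σ * ‖x - y‖ ^ 2)
    (hlip : ∀ x y : H, ‖A x - A y‖ ≤ β * ‖x - y‖)
    (hJ : ∀ x : H, J x + A (J x) = x) :
    (∀ x y : H, ‖((2 : ℝ) • J x - x) - ((2 : ℝ) • J y - y)‖ ≤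
      Real.sqrt (1 - 4 * σ / (1 + 2 * σ + β ^ 2)) * ‖x - y‖) ∧
    Real.sqrt (1 - 4 * σ / (1 + 2 * σ + β ^ 2)) < 1 := by
  refine ⟨fun x y => ?_, sqrt_one_sub_div_lt_one hσ⟩
  rw [reflected_resolvent_sub_eq hJ, sub_eq_resolvent_sub_add hJ x y]
  refine norm_sub_le_sqrt_mul_norm_add hσ.le ?_ (hlip (J x) (J y))
  rw [real_inner_comm]
  exact hsm (J x) (J y)

theorem reflected_resolvent_contraction_sm_lipschitz
    {H : Type*} [NormedAddCommGroup H] [InnerProductSpace ℝ H]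
    (σ β : ℝ) (hσ : 0 < σ) (hσβ : σ ≤ β)
    (A J : H → H)
    (hsm : ∀ x y : H, ⟪A x - A y, x - y⟫ ≥ σ * ‖x - y‖ ^ 2)
    (hlip : ∀ x y : H, ‖A x - A y‖ ≤ β * ‖x - y‖)
    (hJ : ∀ x : H, J x + A (J x) = x) :
    (∀ x y : H, ‖((2 : ℝ) • J x - x) - ((2 : ℝ) • J y - y)‖ ≤
      Real.sqrt (1 - 4 * σ / (1 + 2 * σ + β ^ 2)) * ‖x - y‖) ∧
    Real.sqrt (1 - 4 * σ / (1 + 2 * σ + β ^ 2)) < 1 :=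
  reflected_resolvent_contraction_sm_lipschitz_general σ β hσ A J hsm hlip hJ
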